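/- arXiv:math/0702138 — 3 statements merged into one kernel-verified Lean document; each statement's English description precedes it below -/
import Mathlib

section
/- Let A be a cubical object in an abelian category 𝒜, i.e. a contravariant functor from the cube category to 𝒜. For each n, let π_{n,i} : A(n) → A(n) be the endomorphism p_i^* ∘ η_{n,i,∞}^*, and π_n := (id − π_{n,n}) ∘ ⋯ ∘ (id − π_{n,1}). Let A(n)_0 := ⋂_{i=1}^n ker η_{n,i,∞}^* and A(n)_degn := Σ_{i=1}^n p_i^*(A(n−1)). Then π_n maps A(n) into A(n)_0 and defines a direct sum splitting A(n) = A(n)_degn ⊕ A(n)_0. -/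
/-!
Statement 0.  Cubical objects and the splitting `A(n) = A(n)_degn ⊕ A(n)_0`.

The cube category `Cube` is the subcategory of `Sets` with objects the cubes
`{0,∞}^n` (modeled as `Fin n → Bool`, with `false = 0` and `true = ∞`), and
morphisms generated by the coordinate insertions `η_{n,i,ε}`, the projections
`p_i`, permutations of coordinates and the involutions exchanging `0` and `∞`.
A cubical object in the abelian category of abelian groups is a contravariant
functor from `Cube` to abelian groups.
-/

/-- Morphisms of the cubical category, as maps of sets `{0,∞}^m → {0,∞}^n`,
generated by insertions, projections, permutations and involutions. -/
inductive IsCubeHom : ∀ {m n : ℕ}, ((Fin m → Bool) → (Fin n → Bool)) → Prop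
  | id (n : ℕ) : IsCubeHom (_root_.id : (Fin n → Bool) → (Fin n → Bool))
  | comp {l m n : ℕ} {f : (Fin l → Bool) → (Fin m → Bool)}
      {g : (Fin m → Bool) → (Fin n → Bool)} :
      IsCubeHom f → IsCubeHom g → IsCubeHom (g ∘ f)
  | insert {n : ℕ} (i : Fin (n + 1)) (ε : Bool) :
      IsCubeHom (fun y : Fin n → Bool => i.insertNth ε y)
  | proj {n : ℕ} (i : Fin (n + 1)) :
      IsCubeHom (fun y : Fin (n + 1) → Bool => y ∘ i.succAbove)
  | perm {n : ℕ} (σ : Equiv.Perm (Fin n)) :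
      IsCubeHom (fun y : Fin n → Bool => y ∘ σ)
  | invol {n : ℕ} (i : Fin n) :
      IsCubeHom (fun y : Fin n → Bool => Function.update y i (!(y i)))

/-- A cubical object of abelian groups: a contravariant functor `Cube^op → Ab`. -/
structure CubicalObject where
  obj : ℕ → Type
  grp : ∀ n, AddCommGroup (obj n)
  map : ∀ {m n : ℕ} (f : (Fin m → Bool) → (Fin n → Bool)), IsCubeHom f → (obj n →+ obj m)
  map_id : ∀ n : ℕ, map _ (IsCubeHom.id n) = AddMonoidHom.id (obj n)
  map_comp : ∀ {l m n : ℕ} (f : (Fin l → Bool) → (Fin m → Bool)) (hf : IsCubeHom f)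
      (g : (Fin m → Bool) → (Fin n → Bool)) (hg : IsCubeHom g),
      map (g ∘ f) (hf.comp hg) = (map f hf).comp (map g hg)

attribute [instance] CubicalObject.grp

namespace CubicalObject

variable (A : CubicalObject)

/-- The face map `η_{n+1,i,ε}^* : A(n+1) → A(n)`. -/
def face {n : ℕ} (i : Fin (n + 1)) (ε : Bool) : A.obj (n + 1) →+ A.obj n :=
  A.map _ (IsCubeHom.insert i ε)

/-- The degeneracy `p_i^* : A(n) → A(n+1)`. -/
def degen {n : ℕ} (i : Fin (n + 1)) : A.obj n →+ A.obj (n + 1) :=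
  A.map _ (IsCubeHom.proj i)

/-- `π_{n,i} = p_i^* ∘ η_{n,i,∞}^*`. -/
def pi1 {n : ℕ} (i : Fin (n + 1)) : A.obj (n + 1) →+ A.obj (n + 1) :=
  (A.degen i).comp (A.face i true)

/-- `π_n = (id − π_{n,n}) ∘ ⋯ ∘ (id − π_{n,1})`. -/
def piTot : ∀ n : ℕ, A.obj n →+ A.obj n
  | 0 => AddMonoidHom.id _
  | (n + 1) =>
      (List.ofFn fun i : Fin (n + 1) =>
        AddMonoidHom.id (A.obj (n + 1)) - A.pi1 i).foldl
        (fun acc g => g.comp acc) (AddMonoidHom.id _)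

/-- `A(n)_0 = ⋂_{i=1}^n ker η_{n,i,∞}^*`. -/
def zeroPart : ∀ n : ℕ, AddSubgroup (A.obj n)
  | 0 => ⊤
  | (n + 1) => ⨅ i : Fin (n + 1), (A.face i true).ker

/-- `A(n)_degn = Σ_{i=1}^n p_i^*(A(n−1))`. -/
def degnPart : ∀ n : ℕ, AddSubgroup (A.obj n)
  | 0 => ⊥
  | (n + 1) => ⨆ i : Fin (n + 1), (A.degen i).range

end CubicalObject


theorem val_succAbove' {n : ℕ} (p : Fin (n+1)) (k : Fin n) :
    (p.succAbove k : ℕ) = if (k:ℕ) < (p:ℕ) then (k:ℕ) else (k:ℕ)+1 := by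
  rw [Fin.succAbove]
  by_cases hk : (k:ℕ) < (p:ℕ)
  · rw [if_pos (by simpa [Fin.lt_def] using hk), if_pos hk]; rfl
  · rw [if_neg (by simpa [Fin.lt_def] using hk), if_neg hk]; rfl

def low {m : ℕ} (i j : Fin (m+2)) : Fin (m+1) :=
  if h : (i:ℕ) < (j:ℕ) then ⟨i, by have := j.is_lt; omega⟩ else ⟨(i:ℕ)-1, by have := i.is_lt; omega⟩

theorem succAbove_low {m : ℕ} {i j : Fin (m+2)} (h : i ≠ j) : j.succAbove (low i j) = i := by
  have hv : (i:ℕ) ≠ (j:ℕ) := fun hh => h (Fin.ext hh)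
  apply Fin.ext
  rw [val_succAbove']
  simp only [low]
  split_ifs <;> simp_all <;> omega

theorem succAbove_succAbove_low {m : ℕ} {i j : Fin (m+2)} (h : i ≠ j) (k : Fin m) :
    j.succAbove ((low i j).succAbove k) = i.succAbove ((low j i).succAbove k) := by
  have hv : (i:ℕ) ≠ (j:ℕ) := fun hh => h (Fin.ext hh)
  apply Fin.ext
  rw [val_succAbove', val_succAbove', val_succAbove', val_succAbove']
  simp only [low]
  split_ifs <;> simp_all <;> omega

theorem insertNth_comp_succAbove {m : ℕ} {i j : Fin (m+2)} (h : i ≠ j) (ε : Bool)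
    (y : Fin (m+1) → Bool) :
    (i.insertNth ε y) ∘ j.succAbove = (low i j).insertNth ε (y ∘ (low j i).succAbove) := by
  funext l
  by_cases hl : l = low i j
  · subst hl
    simp only [Function.comp_apply, succAbove_low h, Fin.insertNth_apply_same]
  · obtain ⟨k, rfl⟩ := Fin.exists_succAbove_eq hl
    simp only [Function.comp_apply, succAbove_succAbove_low h, Fin.insertNth_apply_succAbove]

theorem insertNth_insertNth_low {m : ℕ} {i j : Fin (m+2)} (h : i ≠ j) (a b : Bool)
    (z : Fin m → Bool) :
    Fin.insertNth (α := fun _ => Bool) j a ((low i j).insertNth b z)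
      = Fin.insertNth (α := fun _ => Bool) i b ((low j i).insertNth a z) := by
  funext l
  by_cases hl : l = j
  · rw [hl]
    have h2 : Fin.insertNth (α := fun _ => Bool) i b ((low j i).insertNth a z)
        (i.succAbove (low j i)) = a := by
      simp
    rw [succAbove_low h.symm] at h2
    rw [Fin.insertNth_apply_same, h2]
  · obtain ⟨k, rfl⟩ := Fin.exists_succAbove_eq hl
    rw [Fin.insertNth_apply_succAbove]
    by_cases hk : k = low i j
    · subst hk
      rw [succAbove_low h, Fin.insertNth_apply_same, Fin.insertNth_apply_same]
    · obtain ⟨t, rfl⟩ := Fin.exists_succAbove_eq hk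
      rw [Fin.insertNth_apply_succAbove, succAbove_succAbove_low h,
        Fin.insertNth_apply_succAbove, Fin.insertNth_apply_succAbove]


namespace CubicalObject

variable (A : CubicalObject)

theorem map_congr' {m n : ℕ} {f g : (Fin m → Bool) → (Fin n → Bool)} (h : f = g)
    (hf : IsCubeHom f) (hg : IsCubeHom g) : A.map f hf = A.map g hg := by
  subst h; rfl

theorem face_degen_same {n : ℕ} (i : Fin (n+1)) (ε : Bool) (x : A.obj n) :
    A.face i ε (A.degen i x) = x := by
  have hc : A.map _ ((IsCubeHom.insert i ε).comp (IsCubeHom.proj i))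
      = (A.face i ε).comp (A.degen i) := A.map_comp _ _ _ _
  have he : ((fun y : Fin (n+1) → Bool => y ∘ i.succAbove)
        ∘ (fun y : Fin n → Bool => i.insertNth ε y)) = _root_.id := by
    funext y k
    simp
  rw [A.map_congr' he _ (IsCubeHom.id n), A.map_id] at hc
  exact (DFunLike.congr_fun hc x).symm

theorem face_comp_degen_ne {m : ℕ} {i j : Fin (m+2)} (h : i ≠ j) (ε : Bool) :
    (A.face i ε).comp (A.degen j) = (A.degen (low j i)).comp (A.face (low i j) ε) := by
  calc (A.face i ε).comp (A.degen j)
      = A.map _ ((IsCubeHom.insert i ε).comp (IsCubeHom.proj j)) := (A.map_comp _ _ _ _).symm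
    _ = A.map _ ((IsCubeHom.proj (low j i)).comp (IsCubeHom.insert (low i j) ε)) :=
        A.map_congr' (funext fun y => insertNth_comp_succAbove h ε y) _ _
    _ = (A.degen (low j i)).comp (A.face (low i j) ε) := A.map_comp _ _ _ _

theorem face_comp_face {m : ℕ} {i j : Fin (m+2)} (h : i ≠ j) (a b : Bool) :
    (A.face (low i j) b).comp (A.face j a) = (A.face (low j i) a).comp (A.face i b) := by
  calc (A.face (low i j) b).comp (A.face j a)
      = A.map _ ((IsCubeHom.insert (low i j) b).comp (IsCubeHom.insert j a)) :=
        (A.map_comp _ _ _ _).symm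
    _ = A.map _ ((IsCubeHom.insert (low j i) a).comp (IsCubeHom.insert i b)) :=
        A.map_congr' (funext fun z => insertNth_insertNth_low h a b z) _ _
    _ = (A.face (low j i) a).comp (A.face i b) := A.map_comp _ _ _ _

theorem degen_comp_degen {m : ℕ} {i j : Fin (m+2)} (h : i ≠ j) :
    (A.degen i).comp (A.degen (low j i)) = (A.degen j).comp (A.degen (low i j)) := by
  calc (A.degen i).comp (A.degen (low j i))
      = A.map _ ((IsCubeHom.proj i).comp (IsCubeHom.proj (low j i))) := (A.map_comp _ _ _ _).symm
    _ = A.map _ ((IsCubeHom.proj j).comp (IsCubeHom.proj (low i j))) :=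
        A.map_congr' (funext fun y =>
          funext fun k => congrArg y (succAbove_succAbove_low h k).symm) _ _
    _ = (A.degen j).comp (A.degen (low i j)) := A.map_comp _ _ _ _

theorem exists_succ {n : ℕ} {i j : Fin (n+1)} (h : i ≠ j) : ∃ m, n = m + 1 := by
  have hn : n ≠ 0 := by
    rintro rfl
    exact h (Fin.ext (by omega))
  exact ⟨n - 1, by omega⟩

theorem face_pi1_of_ne {n : ℕ} {i j : Fin (n+1)} (h : i ≠ j) (x : A.obj (n+1))
    (hx : A.face i true x = 0) : A.face i true (A.pi1 j x) = 0 := by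
  obtain ⟨m, rfl⟩ := exists_succ h
  have e1 := DFunLike.congr_fun (A.face_comp_degen_ne h true) (A.face j true x)
  have e2 := DFunLike.congr_fun (A.face_comp_face h true true) x
  simp only [AddMonoidHom.comp_apply] at e1 e2
  show A.face i true (A.degen j (A.face j true x)) = 0
  rw [e1, e2, hx, map_zero, map_zero]

theorem pi1_degen_mem {n : ℕ} {i j : Fin (n+1)} (h : i ≠ j) (y : A.obj n) :
    A.pi1 i (A.degen j y) ∈ (A.degen j).range := by
  obtain ⟨m, rfl⟩ := exists_succ h
  have e1 := DFunLike.congr_fun (A.face_comp_degen_ne h true) y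
  have e2 := DFunLike.congr_fun (A.degen_comp_degen h) (A.face (low i j) true y)
  simp only [AddMonoidHom.comp_apply] at e1 e2
  show A.degen i (A.face i true (A.degen j y)) ∈ _
  rw [e1, e2]
  exact ⟨_, rfl⟩

theorem pi1_degen_same {n : ℕ} (i : Fin (n+1)) (y : A.obj n) :
    A.pi1 i (A.degen i y) = A.degen i y := by
  show A.degen i (A.face i true (A.degen i y)) = A.degen i y
  rw [A.face_degen_same]

theorem foldl_comp_apply {M : Type} [AddCommGroup M] (L : List (M →+ M)) (g : M →+ M) (x : M) :
    (L.foldl (fun acc h => h.comp acc) g) x = L.foldl (fun y h => h y) (g x) := by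
  induction L generalizing g with
  | nil => rfl
  | cons f L ih => exact ih (f.comp g)

/-- Apply the maps `id - π_i`, `i ∈ l`, in order. -/
def apl {n : ℕ} (l : List (Fin (n+1))) (x : A.obj (n+1)) : A.obj (n+1) :=
  l.foldl (fun y i => y - A.pi1 i y) x

theorem apl_nil {n : ℕ} (x : A.obj (n+1)) : A.apl [] x = x := rfl

theorem apl_cons {n : ℕ} (i : Fin (n+1)) (l : List (Fin (n+1))) (x : A.obj (n+1)) :
    A.apl (i :: l) x = A.apl l (x - A.pi1 i x) := rfl

theorem apl_append {n : ℕ} (l₁ l₂ : List (Fin (n+1))) (x : A.obj (n+1)) :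
    A.apl (l₁ ++ l₂) x = A.apl l₂ (A.apl l₁ x) :=
  List.foldl_append ..

theorem apl_zero {n : ℕ} (l : List (Fin (n+1))) : A.apl l 0 = 0 := by
  induction l with
  | nil => rfl
  | cons i l ih => rw [apl_cons, map_zero, sub_zero, ih]

theorem piTot_eq_apl {n : ℕ} (x : A.obj (n+1)) :
    A.piTot (n+1) x = A.apl (List.finRange (n+1)) x := by
  show (List.ofFn fun i : Fin (n+1) => AddMonoidHom.id (A.obj (n+1)) - A.pi1 i).foldl
      (fun acc g => g.comp acc) (AddMonoidHom.id _) x = _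
  rw [foldl_comp_apply, List.ofFn_eq_map, List.foldl_map]
  rfl

theorem apl_face_eq_zero_of_not_mem {n : ℕ} (l : List (Fin (n+1))) {j : Fin (n+1)}
    (hj : j ∉ l) {x : A.obj (n+1)} (hx : A.face j true x = 0) :
    A.face j true (A.apl l x) = 0 := by
  induction l generalizing x with
  | nil => exact hx
  | cons i l ih =>
    rw [apl_cons]
    refine ih (fun hm => hj (List.mem_cons_of_mem _ hm)) ?_
    rw [map_sub, hx, A.face_pi1_of_ne (fun he => hj (by rw [he]; exact List.mem_cons_self)) x hx,
      sub_zero]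

theorem apl_face_eq_zero_of_mem {n : ℕ} (l : List (Fin (n+1))) (hl : l.Nodup)
    (x : A.obj (n+1)) {j : Fin (n+1)} (hj : j ∈ l) :
    A.face j true (A.apl l x) = 0 := by
  induction l generalizing x with
  | nil => exact absurd hj List.not_mem_nil
  | cons i l ih =>
    rw [apl_cons]
    rcases List.mem_cons.1 hj with rfl | hj'
    · refine A.apl_face_eq_zero_of_not_mem l (List.nodup_cons.1 hl).1 ?_
      rw [map_sub]
      show A.face j true x - A.face j true (A.degen j (A.face j true x)) = 0
      rw [A.face_degen_same, sub_self]
    · exact ih (List.nodup_cons.1 hl).2 _ hj'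

theorem apl_sub_mem_degn {n : ℕ} (l : List (Fin (n+1))) (x : A.obj (n+1)) :
    A.apl l x - x ∈ A.degnPart (n+1) := by
  induction l generalizing x with
  | nil => rw [apl_nil, sub_self]; exact zero_mem _
  | cons i l ih =>
    rw [apl_cons]
    have h1 : (x - A.pi1 i x) - x ∈ A.degnPart (n+1) := by
      have he : (x - A.pi1 i x) - x = -(A.pi1 i x) := by abel
      rw [he]
      refine neg_mem ?_
      have hle : (A.degen i).range ≤ A.degnPart (n+1) :=
        le_iSup (fun k : Fin (n+1) => (A.degen k).range) i
      exact hle ⟨A.face i true x, rfl⟩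
    have h2 := ih (x - A.pi1 i x)
    have h3 := add_mem h2 h1
    rwa [sub_add_sub_cancel] at h3

theorem apl_fixed {n : ℕ} (l : List (Fin (n+1))) {x : A.obj (n+1)}
    (hx : ∀ i, A.face i true x = 0) : A.apl l x = x := by
  induction l with
  | nil => rfl
  | cons i l ih =>
    rw [apl_cons]
    have hp : A.pi1 i x = 0 := by
      show A.degen i (A.face i true x) = 0
      rw [hx i, map_zero]
    rw [hp, sub_zero, ih]

theorem apl_mem_range {n : ℕ} (l : List (Fin (n+1))) {j : Fin (n+1)} {x : A.obj (n+1)}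
    (hx : x ∈ (A.degen j).range) : A.apl l x ∈ (A.degen j).range := by
  induction l generalizing x with
  | nil => exact hx
  | cons i l ih =>
    rw [apl_cons]
    refine ih ?_
    rcases eq_or_ne i j with rfl | hne
    · obtain ⟨y, rfl⟩ := hx
      rw [A.pi1_degen_same, sub_self]
      exact zero_mem _
    · obtain ⟨y, rfl⟩ := hx
      exact sub_mem ⟨y, rfl⟩ (A.pi1_degen_mem hne y)

theorem piTot_degen {n : ℕ} (j : Fin (n+1)) (y : A.obj n) :
    A.piTot (n+1) (A.degen j y) = 0 := by
  rw [piTot_eq_apl]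
  obtain ⟨s, t, hst⟩ := List.append_of_mem (List.mem_finRange j)
  rw [hst, apl_append, apl_cons]
  obtain ⟨z, hz⟩ := A.apl_mem_range s (⟨y, rfl⟩ : A.degen j y ∈ (A.degen j).range)
  rw [← hz, A.pi1_degen_same, sub_self, apl_zero]

end CubicalObject


/-- `π_n` maps `A(n)` into `A(n)_0` and defines a direct sum splitting
`A(n) = A(n)_degn ⊕ A(n)_0`. -/
theorem stmt0 (A : CubicalObject) (n : ℕ) :
    (∀ x : A.obj n, A.piTot n x ∈ A.zeroPart n) ∧
      IsCompl (A.degnPart n) (A.zeroPart n) := by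
  cases n with
  | zero =>
    constructor
    · intro x
      show A.piTot 0 x ∈ (⊤ : AddSubgroup (A.obj 0))
      exact AddSubgroup.mem_top _
    · show IsCompl (⊥ : AddSubgroup (A.obj 0)) ⊤
      exact isCompl_bot_top
  | succ m =>
    have hzero : ∀ x : A.obj (m+1), A.piTot (m+1) x ∈ A.zeroPart (m+1) := by
      intro x
      show A.piTot (m+1) x ∈ ⨅ i : Fin (m+1), (A.face i true).ker
      rw [AddSubgroup.mem_iInf]
      intro i
      rw [AddMonoidHom.mem_ker, A.piTot_eq_apl]
      exact A.apl_face_eq_zero_of_mem _ (List.nodup_finRange _) x (List.mem_finRange i)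
    refine ⟨hzero, ?_, ?_⟩
    · -- Disjoint
      rw [disjoint_iff_inf_le]
      intro x hx
      have hxd : x ∈ A.degnPart (m+1) := hx.1
      have hxz : x ∈ A.zeroPart (m+1) := hx.2
      have hface : ∀ i : Fin (m+1), A.face i true x = 0 := by
        intro i
        have := (AddSubgroup.mem_iInf).1 hxz i
        exact AddMonoidHom.mem_ker.1 this
      have hfix : A.piTot (m+1) x = x := by
        rw [A.piTot_eq_apl]
        exact A.apl_fixed _ hface
      have hker : A.degnPart (m+1) ≤ (A.piTot (m+1)).ker := by
        show (⨆ i : Fin (m+1), (A.degen i).range) ≤ _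
        refine iSup_le fun j => ?_
        rintro z ⟨y, rfl⟩
        exact AddMonoidHom.mem_ker.2 (A.piTot_degen j y)
      have : A.piTot (m+1) x = 0 := AddMonoidHom.mem_ker.1 (hker hxd)
      rw [hfix] at this
      rw [this]
      exact zero_mem _
    · -- Codisjoint
      rw [codisjoint_iff_le_sup]
      intro x _
      rw [AddSubgroup.mem_sup]
      refine ⟨x - A.piTot (m+1) x, ?_, A.piTot (m+1) x, hzero x, by abel⟩
      have h1 := A.apl_sub_mem_degn (List.finRange (m+1)) x
      rw [← A.piTot_eq_apl] at h1
      have : x - A.piTot (m+1) x = -(A.piTot (m+1) x - x) := by abel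
      rw [this]
      exact neg_mem h1
end

section
/- Let k be a field and f : Y → X a projective surjective morphism of normal finite-type k-schemes. Let D be a Cartier divisor on X such that the pullback f^*D is effective on Y. Then D is effective on X. -/
/-!
Statement 3.  Let `k` be a field, `f : Y → X` a projective surjective morphism of
normal finite-type `k`-schemes, and `D` a Cartier divisor on `X` whose pullback
`f^*D` is effective on `Y`.  Then `D` is effective on `X`.

A Cartier divisor on an integral scheme `X` is modeled by its local equations:
a nonzero element of the function field at each point, with the ratio of the
equations at nearby points a unit of the local ring.  Effectivity means that
each local equation lies in (the image of) the corresponding local ring.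
The pullback of `D` along the dominant morphism `f` is given by applying the
induced map `φ : K(X) → K(Y)` of function fields to the local equations.

(Mathlib has no projective morphisms; projectivity is used through properness,
so we assume the morphism universally closed and of finite type.)
-/

open AlgebraicGeometry CategoryTheory CategoryTheory.Limits

/-- A scheme is normal if all of its local rings are integrally closed domains. -/
def IsNormalScheme (X : Scheme) : Prop :=
  ∀ x : X, IsDomain (X.presheaf.stalk x) ∧ IsIntegrallyClosed (X.presheaf.stalk x)

/-- A Cartier divisor on an integral scheme, given by compatible local equations
in the function field. -/
structure CartierDivisor (X : Scheme) [IsIntegral X] where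
  /-- the local equation at each point -/
  eq : X → X.functionField
  ne_zero : ∀ x, eq x ≠ 0
  /-- locally, the equations agree up to a unit of the local ring -/
  compat : ∀ x : X, ∃ U : X.Opens, x ∈ U ∧ ∀ y ∈ U,
    ∃ u : (X.presheaf.stalk y)ˣ,
      eq y = algebraMap (X.presheaf.stalk y) X.functionField (u : X.presheaf.stalk y) * eq x

/-- A Cartier divisor is effective (`D ≥ 0`) if each local equation is regular,
i.e. lies in the image of the local ring in the function field. -/
def CartierDivisor.Effective {X : Scheme} [IsIntegral X] (D : CartierDivisor X) : Prop :=
  ∀ x : X, D.eq x ∈ Set.range (algebraMap (X.presheaf.stalk x) X.functionField)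

section CommAlg

variable {R K : Type*} [CommRing R] [IsDomain R] [Field K] [Algebra R K] [IsFractionRing R K]

/-- The denominator ideal of `b : K`. -/
def denIdeal (R : Type*) [CommRing R] {K : Type*} [CommRing K] [Algebra R K] (b : K) :
    Ideal R where
  carrier := {r : R | algebraMap R K r * b ∈ Set.range (algebraMap R K)}
  zero_mem' := ⟨0, by simp⟩
  add_mem' := by
    rintro r s ⟨c, hc⟩ ⟨d, hd⟩
    exact ⟨c + d, by simp [add_mul, hc, hd]⟩
  smul_mem' := by
    rintro c r ⟨d, hd⟩
    exact ⟨c * d, by simp [smul_eq_mul, mul_assoc, hd]⟩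

lemma mem_denIdeal {b : K} {r : R} :
    r ∈ denIdeal R b ↔ algebraMap R K r * b ∈ Set.range (algebraMap R K) := Iff.rfl

lemma krull_exists_prime [IsNoetherianRing R] [IsIntegrallyClosed R] {a : K}
    (ha : a ∉ Set.range (algebraMap R K)) :
    ∃ p : Ideal R, p.IsPrime ∧ ∃ n d : R, n ∈ p ∧ d ∉ p ∧
      a⁻¹ * algebraMap R K d = algebraMap R K n := by
  have ha0 : a ≠ 0 := fun h => ha ⟨0, by simp [h]⟩
  -- the set of denominator ideals
  set 𝒮 : Set (Ideal R) := {I | ∃ r : R,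
      algebraMap R K r * a ∉ Set.range (algebraMap R K) ∧ I = denIdeal R (algebraMap R K r * a)}
    with h𝒮
  have hne : 𝒮.Nonempty := ⟨denIdeal R (algebraMap R K 1 * a), 1, by simpa using ha, rfl⟩
  obtain ⟨p, hp𝒮, hpmax⟩ :=
    (set_has_maximal_iff_noetherian.mpr (inferInstance : IsNoetherianRing R)) 𝒮 hne
  obtain ⟨r₀, hb, rfl⟩ := hp𝒮
  set b : K := algebraMap R K r₀ * a with hbdef
  have hmax : ∀ I ∈ 𝒮, denIdeal R b ≤ I → I = denIdeal R b := by
    intro I hI hle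
    by_contra hne'
    exact hpmax I hI (lt_of_le_of_ne hle (Ne.symm hne'))
  -- the denominator ideal is prime
  have hprime : (denIdeal R b).IsPrime := by
    constructor
    · intro h
      have h1 : (1 : R) ∈ denIdeal R b := (Ideal.eq_top_iff_one _).mp h
      rw [mem_denIdeal, map_one, one_mul] at h1
      exact hb h1
    · intro x y hxy
      by_cases hy : y ∈ denIdeal R b
      · exact Or.inr hy
      left
      have hb' : algebraMap R K (y * r₀) * a ∉ Set.range (algebraMap R K) := by
        intro h
        apply hy
        rw [mem_denIdeal, hbdef, ← mul_assoc, ← map_mul]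
        exact h
      have hle : denIdeal R b ≤ denIdeal R (algebraMap R K (y * r₀) * a) := by
        intro r hr
        obtain ⟨c, hc⟩ := hr
        rw [mem_denIdeal]
        refine ⟨y * c, ?_⟩
        rw [map_mul, hc, hbdef, map_mul]; ring
      have heq := hmax _ ⟨y * r₀, hb', rfl⟩ hle
      rw [← heq, mem_denIdeal]
      obtain ⟨c, hc⟩ := hxy
      refine ⟨c, ?_⟩
      rw [hc, hbdef, map_mul, map_mul]; ring
  -- the denominator ideal is nonzero
  obtain ⟨m, d₀, hd₀, hdiv⟩ := IsFractionRing.div_surjective (A := R) b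
  have hd₀0 : (d₀ : R) ≠ 0 := nonZeroDivisors.ne_zero hd₀
  have hd₀K : algebraMap R K d₀ ≠ 0 := by
    simpa using (map_ne_zero_iff _ (IsFractionRing.injective R K)).mpr hd₀0
  have hd₀mem : d₀ ∈ denIdeal R b := by
    rw [mem_denIdeal]
    exact ⟨m, by rw [← hdiv]; field_simp⟩
  -- find t ∈ p with b * t ∉ p (determinant trick / integral closedness)
  set N : Submodule R K := Submodule.map (Algebra.linearMap R K) (denIdeal R b) with hN
  have hsm : ¬ ∀ z ∈ N, b * z ∈ N := by
    intro hsm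
    have hint : IsIntegral R b := by
      refine isIntegral_of_smul_mem_submodule N ?_ ?_ b ?_
      · rw [Submodule.ne_bot_iff]
        refine ⟨algebraMap R K d₀, ⟨d₀, hd₀mem, rfl⟩, hd₀K⟩
      · exact Submodule.FG.map _ (IsNoetherian.noetherian _)
      · intro z hz; rw [smul_eq_mul]; exact hsm z hz
    obtain ⟨w, hw⟩ := IsIntegrallyClosed.algebraMap_eq_of_integral hint
    exact hb ⟨w, hw⟩
  push_neg at hsm
  obtain ⟨z, hz, hbz⟩ := hsm
  obtain ⟨t, ht, rfl⟩ := hz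
  have htmem : t ∈ denIdeal R b := ht
  obtain ⟨s, hs⟩ := (mem_denIdeal.mp htmem)
  have hsnot : s ∉ denIdeal R b := by
    intro hsp
    apply hbz
    refine ⟨s, hsp, ?_⟩
    simp only [Algebra.linearMap_apply] at *
    rw [hs]; ring
  refine ⟨denIdeal R b, hprime, r₀ * t, s, Ideal.mul_mem_left _ _ htmem, hsnot, ?_⟩
  -- a⁻¹ * s = r₀ * t
  have hb0 : b ≠ 0 := fun h => hb ⟨0, by simp [h]⟩
  have hr₀0 : algebraMap R K r₀ ≠ 0 := fun h => hb0 (by rw [hbdef, h, zero_mul])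
  rw [hs, hbdef, map_mul]
  field_simp

end CommAlg

open IsLocalRing TopCat

theorem stmt3 {k : Type} [Field k] (X Y : Scheme) [IsIntegral X] [IsIntegral Y]
    (fX : X ⟶ Spec (CommRingCat.of k)) (fY : Y ⟶ Spec (CommRingCat.of k))
    [LocallyOfFiniteType fX] [LocallyOfFiniteType fY]
    [CompactSpace X] [CompactSpace Y]
    (hXnorm : IsNormalScheme X) (hYnorm : IsNormalScheme Y)
    (f : Y ⟶ X)
    -- `f` is projective (in particular proper) and surjective
    [UniversallyClosed f] [LocallyOfFiniteType f]
    (hsurj : Function.Surjective f.base)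
    -- the induced inclusion of function fields
    (φ : X.functionField →+* Y.functionField)
    (hφ : ∀ (y : Y) (z : X.presheaf.stalk (f.base y)),
      φ (algebraMap (X.presheaf.stalk (f.base y)) X.functionField z) =
        algebraMap (Y.presheaf.stalk y) Y.functionField (f.stalkMap y z))
    (D : CartierDivisor X)
    -- the pullback `f^*D` is effective on `Y`
    (heff : ∀ y : Y, φ (D.eq (f.base y)) ∈
      Set.range (algebraMap (Y.presheaf.stalk y) Y.functionField)) :
    D.Effective := by
  intro x
  by_contra hax
  haveI hdom := (hXnorm x).1
  haveI hic := (hXnorm x).2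
  -- the stalk at x is Noetherian
  haveI hnoeth : IsNoetherianRing (X.presheaf.stalk x) := by
    set U : X.Opens := (X.affineCover.f (X.affineCover.idx x)).opensRange with hUdef
    have hU : IsAffineOpen U := isAffineOpen_opensRange _
    have hxU : x ∈ U := X.affineCover.covers x
    have e : U ≤ fX ⁻¹ᵁ ⊤ := fun a _ => trivial
    have hft : (fX.appLE ⊤ U e).hom.FiniteType :=
      LocallyOfFiniteType.finiteType_of_affine_subset
        fX (isAffineOpen_top _) hU e
    haveI : IsNoetherianRing Γ(Spec (CommRingCat.of k), ⊤) :=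
      isNoetherianRing_of_ringEquiv (CommRingCat.of k)
        (Scheme.ΓSpecIso (CommRingCat.of k)).symm.commRingCatIsoToRingEquiv
    haveI hnoethU : IsNoetherianRing Γ(X, U) := by
      letI := (fX.appLE ⊤ U e).hom.toAlgebra
      haveI : Algebra.FiniteType Γ(Spec (CommRingCat.of k), ⊤) Γ(X, U) := hft
      exact Algebra.FiniteType.isNoetherianRing Γ(Spec (CommRingCat.of k), ⊤) Γ(X, U)
    letI := X.presheaf.algebra_section_stalk (⟨x, hxU⟩ : U)
    haveI := hU.isLocalization_stalk ⟨x, hxU⟩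
    exact IsLocalization.isNoetherianRing (R := Γ(X, U))
      (M := (hU.primeIdealOf ⟨x, hxU⟩).asIdeal.primeCompl)
      (S := X.presheaf.stalk (((⟨x, hxU⟩ : U) : X))) hnoethU
  obtain ⟨p, hp, n, d, hn, hd, heq⟩ := krull_exists_prime (K := X.functionField) hax
  -- choose a point of Y over the generization of x given by p
  obtain ⟨y, hy⟩ := hsurj ((X.fromSpecStalk x).base ⟨p, hp⟩)
  haveI hYdom := (hYnorm y).1
  set x' : X := f.base y with hx'
  have hspec : x' ⤳ x := by
    rw [hy]
    have : (X.fromSpecStalk x).base ⟨p, hp⟩ ∈ Set.range (X.fromSpecStalk x).base :=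
      Set.mem_range_self _
    rwa [Scheme.range_fromSpecStalk] at this
  set ψ : X.presheaf.stalk x ⟶ X.presheaf.stalk x' := X.presheaf.stalkSpecializes hspec with hψ
  -- the preimage of the maximal ideal of the stalk at x' is p
  have hcomap : (maximalIdeal (X.presheaf.stalk x')).comap ψ.hom = p := by
    have h2 := Scheme.SpecMap_stalkSpecializes_fromSpecStalk (X := X) hspec
    have h3 : (X.fromSpecStalk x).base ((Spec.map ψ).base (closedPoint _)) = x' := by
      exact (Scheme.Hom.comp_apply (Spec.map ψ) (X.fromSpecStalk x) (closedPoint _)).symm.trans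
        (by rw [hψ, h2]; exact Scheme.fromSpecStalk_closedPoint)
    have hinj : Function.Injective (X.fromSpecStalk x).base :=
      ((X.fromSpecStalk x).isEmbedding).injective
    have h4 : (Spec.map ψ).base (closedPoint _) = ⟨p, hp⟩ := hinj (by rw [h3, hy])
    exact congrArg PrimeSpectrum.asIdeal h4
  have hψn : ψ n ∈ maximalIdeal (X.presheaf.stalk x') := by
    rw [← hcomap] at hn; exact hn
  have hψd : IsUnit (ψ d) := by
    by_contra h
    exact hd (by rw [← hcomap]; exact (mem_maximalIdeal _).mpr h)
  -- compatibility of ψ with the maps to the function field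
  have hcomp : ∀ z : X.presheaf.stalk x,
      algebraMap (X.presheaf.stalk x') X.functionField (ψ z) =
        algebraMap (X.presheaf.stalk x) X.functionField z := by
    intro z
    show (X.presheaf.stalkSpecializes ((genericPoint_spec X).specializes trivial))
        (X.presheaf.stalkSpecializes hspec z) =
      (X.presheaf.stalkSpecializes ((genericPoint_spec X).specializes trivial)) z
    rw [← CategoryTheory.comp_apply, TopCat.Presheaf.stalkSpecializes_comp]
  -- package (D.eq x)⁻¹ as a nonunit of the stalk at x'
  set c : X.presheaf.stalk x' := ψ n * ((hψd.unit⁻¹ : (X.presheaf.stalk x')ˣ) :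
    X.presheaf.stalk x') with hc
  have hcm : c ∈ maximalIdeal (X.presheaf.stalk x') :=
    Ideal.mul_mem_right _ _ hψn
  have hcnu : ¬ IsUnit c := (mem_maximalIdeal _).mp hcm
  have hιd : algebraMap (X.presheaf.stalk x) X.functionField d ≠ 0 := by
    intro h
    have : d = 0 := IsFractionRing.injective (X.presheaf.stalk x) X.functionField (by simpa using h)
    exact hd (this ▸ p.zero_mem)
  have hinvc : (D.eq x)⁻¹ = algebraMap (X.presheaf.stalk x') X.functionField c := by
    show (D.eq x)⁻¹ = algebraMap (X.presheaf.stalk x') X.functionField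
      (ψ n * ((hψd.unit⁻¹ : (X.presheaf.stalk x')ˣ) : X.presheaf.stalk x'))
    rw [map_mul, hcomp n, ← heq, mul_assoc]
    have hud : algebraMap (X.presheaf.stalk x') X.functionField
        ((hψd.unit⁻¹ : (X.presheaf.stalk x')ˣ) : X.presheaf.stalk x') *
        algebraMap (X.presheaf.stalk x) X.functionField d = 1 := by
      rw [← hcomp d]
      rw [← map_mul]
      rw [hψd.val_inv_mul, map_one]
    have : algebraMap (X.presheaf.stalk x) X.functionField d *
        algebraMap (X.presheaf.stalk x') X.functionField
          ((hψd.unit⁻¹ : (X.presheaf.stalk x')ˣ) : X.presheaf.stalk x') = 1 := by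
      rw [mul_comm]; exact hud
    rw [this, mul_one]
  -- use the compatibility of the local equations
  obtain ⟨Uc, hxUc, hUc⟩ := D.compat x
  have hx'Uc : x' ∈ Uc := hspec.mem_open Uc.2 hxUc
  obtain ⟨u, hu⟩ := hUc x' hx'Uc
  obtain ⟨w, hw⟩ := heff y
  -- φ (D.eq x) lies in the image of the stalk at y
  have h6 : φ (D.eq x) = algebraMap (Y.presheaf.stalk y) Y.functionField
      (f.stalkMap y ((u⁻¹ : (X.presheaf.stalk x')ˣ) : X.presheaf.stalk x') * w) := by
    have : D.eq x = algebraMap (X.presheaf.stalk x') X.functionField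
        ((u⁻¹ : (X.presheaf.stalk x')ˣ) : X.presheaf.stalk x') * D.eq x' := by
      rw [hu, ← mul_assoc, ← map_mul, Units.inv_mul, map_one, one_mul]
    rw [this, map_mul, hφ y, ← hw, ← map_mul]
  have h5 : φ ((D.eq x)⁻¹) = algebraMap (Y.presheaf.stalk y) Y.functionField
      (f.stalkMap y c) := by rw [hinvc, hφ y]
  have h7 : algebraMap (Y.presheaf.stalk y) Y.functionField
      ((f.stalkMap y ((u⁻¹ : (X.presheaf.stalk x')ˣ) : X.presheaf.stalk x') * w) *
        f.stalkMap y c) = 1 := by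
    rw [map_mul, ← h5, ← h6, ← map_mul, mul_inv_cancel₀ (D.ne_zero x), map_one]
  have h8 : (f.stalkMap y ((u⁻¹ : (X.presheaf.stalk x')ˣ) : X.presheaf.stalk x') * w) *
      f.stalkMap y c = 1 := by
    apply IsFractionRing.injective (Y.presheaf.stalk y) Y.functionField
    rw [h7, map_one]
  have hcu : IsUnit (f.stalkMap y c) := IsUnit.of_mul_eq_one _ (by rw [mul_comm] at h8; exact h8)
  exact hcnu (IsLocalHom.map_nonunit c hcu)
end

section
/- Let k be a field of characteristic zero (or char ≠ 2). The k-linear map η : k ⊗_ℤ T(k^*) → Ω^*_{k/ℤ}, defined in degree n by a ⊗ (b₁ ⊗ ⋯ ⊗ b_n) ↦ a · (db₁/b₁) ∧ ⋯ ∧ (db_n/b_n), factors through successive surjections k ⊗_ℤ T(k^*) ↠ k ⊗_ℤ Λ(k^*) ↠ k ⊗_ℤ K^M_*(k) ↠ Ω^*_{k/ℤ}, and the final map k ⊗_ℤ K^M_n(k) → Ω^n_{k/ℤ} is surjective for every n. -/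
open scoped TensorProduct

/-!
Statement 12.  For a field `k` of characteristic zero, the map
`η : k ⊗_ℤ T(k^*) → Ω^*_{k/ℤ}`, `a ⊗ (b₁ ⊗ ⋯ ⊗ b_n) ↦ a·dlog b₁ ∧ ⋯ ∧ dlog b_n`,
factors (degreewise) through successive surjections
`k ⊗ T(k^*) ↠ k ⊗ Λ(k^*) ↠ k ⊗ K^M_*(k) ↠ Ω^*_{k/ℤ}`;
in particular the final map `k ⊗ K^M_n(k) → Ω^n_{k/ℤ}` is surjective for all `n`.

The degree `n` parts of `T(k^*)`, `Λ(k^*)` and `K^M_*(k)` are modeled as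
quotients of the free abelian group on `(k^*)^n`: by multilinearity; by
multilinearity and the relations `… b ⊗ b …` (adjacent equal entries); and by
multilinearity and the Steinberg relations, respectively.
-/

variable (k : Type) [Field k]

/-- multilinearity relations -/
def mlRel (n : ℕ) : Set (FreeAbelianGroup (Fin n → kˣ)) :=
  {z | ∃ (f : Fin n → kˣ) (i : Fin n) (b c : kˣ),
    z = FreeAbelianGroup.of (Function.update f i (b * c)) -
        FreeAbelianGroup.of (Function.update f i b) -
        FreeAbelianGroup.of (Function.update f i c)}

/-- exterior-algebra relations: some adjacent equal pair of entries -/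
def altRel (n : ℕ) : Set (FreeAbelianGroup (Fin n → kˣ)) :=
  {z | ∃ (f : Fin n → kˣ) (i : Fin n) (h : (i : ℕ) + 1 < n),
    f i = f ⟨(i : ℕ) + 1, h⟩ ∧ z = FreeAbelianGroup.of f}

/-- Steinberg relations: some adjacent pair of entries `b`, `1 − b` -/
def stRel (n : ℕ) : Set (FreeAbelianGroup (Fin n → kˣ)) :=
  {z | ∃ (f : Fin n → kˣ) (i : Fin n) (h : (i : ℕ) + 1 < n),
    ((f i : k) + (f ⟨(i : ℕ) + 1, h⟩ : k) = 1) ∧ z = FreeAbelianGroup.of f}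

/-- degree `n` part of the tensor algebra `T(k^*)` -/
def TensPow (n : ℕ) : Type :=
  FreeAbelianGroup (Fin n → kˣ) ⧸ AddSubgroup.closure (mlRel k n)

instance (n : ℕ) : AddCommGroup (TensPow k n) := QuotientAddGroup.Quotient.addCommGroup _

def TensPow.mk (n : ℕ) (f : Fin n → kˣ) : TensPow k n :=
  QuotientAddGroup.mk (FreeAbelianGroup.of f)

/-- degree `n` part of the exterior algebra `Λ(k^*)` -/
def ExtPow (n : ℕ) : Type :=
  FreeAbelianGroup (Fin n → kˣ) ⧸ AddSubgroup.closure (mlRel k n ∪ altRel k n)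

instance (n : ℕ) : AddCommGroup (ExtPow k n) := QuotientAddGroup.Quotient.addCommGroup _

def ExtPow.mk (n : ℕ) (f : Fin n → kˣ) : ExtPow k n :=
  QuotientAddGroup.mk (FreeAbelianGroup.of f)

/-- the `n`-th Milnor K-group of `k` -/
def MilnorK (n : ℕ) : Type :=
  FreeAbelianGroup (Fin n → kˣ) ⧸ AddSubgroup.closure (mlRel k n ∪ stRel k n)

instance (n : ℕ) : AddCommGroup (MilnorK k n) := QuotientAddGroup.Quotient.addCommGroup _

def MilnorK.mk (n : ℕ) (f : Fin n → kˣ) : MilnorK k n :=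
  QuotientAddGroup.mk (FreeAbelianGroup.of f)

/-- `dlog u = u⁻¹ · du` in `Ω¹_{k/ℤ}` -/
noncomputable def dlog (u : kˣ) : KaehlerDifferential ℤ k :=
  ((u⁻¹ : kˣ) : k) • KaehlerDifferential.D ℤ k (u : k)

section Aux
variable {k : Type} [Field k] {n : ℕ}

namespace Stmt12Aux

/-- quotient of a relation element in `MilnorK` is zero -/
lemma milnor_mk_eq_zero {z : FreeAbelianGroup (Fin n → kˣ)}
    (hz : z ∈ mlRel k n ∪ stRel k n) :
    (QuotientAddGroup.mk z : MilnorK k n) = 0 :=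
  (QuotientAddGroup.eq_zero_iff z).2 (AddSubgroup.subset_closure hz)

lemma milnor_ml (f : Fin n → kˣ) (i : Fin n) (b c : kˣ) :
    MilnorK.mk k n (Function.update f i (b * c)) =
      MilnorK.mk k n (Function.update f i b) + MilnorK.mk k n (Function.update f i c) := by
  have h0 := milnor_mk_eq_zero (k := k) (n := n)
    (Or.inl ⟨f, i, b, c, rfl⟩ : _ ∈ mlRel k n ∪ stRel k n)
  rw [QuotientAddGroup.mk_sub, QuotientAddGroup.mk_sub, sub_sub, sub_eq_zero] at h0
  exact h0

lemma milnor_st (f : Fin n → kˣ) (i : Fin n) (h : (i : ℕ) + 1 < n)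
    (hsum : ((f i : k) + (f ⟨(i : ℕ) + 1, h⟩ : k) = 1)) :
    MilnorK.mk k n f = 0 :=
  milnor_mk_eq_zero (Or.inr ⟨f, i, h, hsum, rfl⟩)

variable (f : Fin n → kˣ) (i : Fin n) (h : (i : ℕ) + 1 < n)

/-- the symbol with entries `b`, `c` in slots `i`, `i+1` and `f` elsewhere -/
def eps (b c : kˣ) : MilnorK k n :=
  MilnorK.mk k n (Function.update (Function.update f i b) ⟨(i : ℕ) + 1, h⟩ c)

lemma hij : i ≠ (⟨(i : ℕ) + 1, h⟩ : Fin n) := by simp [Fin.ext_iff]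

lemma eps_mul_left (b b' c : kˣ) :
    eps f i h (b * b') c = eps f i h b c + eps f i h b' c := by
  have := milnor_ml (Function.update f ⟨(i : ℕ) + 1, h⟩ c) i b b'
  simpa only [eps, Function.update_comm (hij i h).symm] using this

lemma eps_mul_right (b c c' : kˣ) :
    eps f i h b (c * c') = eps f i h b c + eps f i h b c' := by
  exact milnor_ml (Function.update f i b) ⟨(i : ℕ) + 1, h⟩ c c'

lemma eps_st (b c : kˣ) (hbc : (b : k) + (c : k) = 1) : eps f i h b c = 0 := by
  apply milnor_st _ i h
  rw [Function.update_of_ne (hij i h), Function.update_self, Function.update_self]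
  exact hbc

lemma eps_one_left (c : kˣ) : eps f i h 1 c = 0 := by
  have := eps_mul_left f i h 1 1 c
  rw [one_mul] at this
  exact (left_eq_add.mp this)

lemma eps_one_right (b : kˣ) : eps f i h b 1 = 0 := by
  have := eps_mul_right f i h b 1 1
  rw [one_mul] at this
  exact (left_eq_add.mp this)

lemma eps_inv_right (b c : kˣ) : eps f i h b c⁻¹ = - eps f i h b c := by
  have := eps_mul_right f i h b c c⁻¹
  rw [mul_inv_cancel, eps_one_right] at this
  have h2 : eps f i h b c⁻¹ + eps f i h b c = 0 := by rw [add_comm]; exact this.symm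
  exact eq_neg_of_add_eq_zero_left h2

lemma eps_neg_self (b : kˣ) : eps f i h b (-b) = 0 := by
  by_cases hb : b = 1
  · subst hb; exact eps_one_left f i h (-1)
  · have hbk : (b : k) ≠ 1 := fun hc => hb (Units.ext hc)
    have hbk0 : (b : k) ≠ 0 := Units.ne_zero b
    have hbinvk : ((b⁻¹ : kˣ) : k) ≠ 1 := by
      rw [Units.val_inv_eq_inv_val]
      intro hc
      exact hbk (by field_simp at hc; simpa using hc.symm)
    set u : kˣ := Units.mk0 (1 - (b : k)) (sub_ne_zero.2 (Ne.symm hbk)) with hu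
    set v : kˣ := Units.mk0 (1 - ((b⁻¹ : kˣ) : k)) (sub_ne_zero.2 (Ne.symm hbinvk)) with hv
    have huv : -b = u * v⁻¹ := by
      apply Units.ext
      have hv0 : (1 - ((b⁻¹ : kˣ) : k)) ≠ 0 := sub_ne_zero.2 (Ne.symm hbinvk)
      rw [Units.val_mul, hu, hv, Units.val_inv_eq_inv_val, Units.val_mk0, Units.val_mk0,
        Units.val_neg, eq_comm, mul_inv_eq_iff_eq_mul₀ hv0, Units.val_inv_eq_inv_val]
      field_simp
      ring
    have e1 : eps f i h b u = 0 := by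
      apply eps_st
      rw [hu, Units.val_mk0]; ring
    have e2 : eps f i h (b⁻¹) v = 0 := by
      apply eps_st
      rw [hv, Units.val_mk0, Units.val_inv_eq_inv_val]; ring
    have e3 : eps f i h b v = 0 := by
      have := eps_mul_left f i h b b⁻¹ v
      rw [mul_inv_cancel, eps_one_left, e2, add_zero] at this
      exact this.symm
    rw [huv, eps_mul_right, e1, eps_inv_right, e3, neg_zero, add_zero]

lemma eps_anticomm (a b : kˣ) : eps f i h a b + eps f i h b a = 0 := by
  have h0 := eps_neg_self f i h (a * b)
  rw [eps_mul_left] at h0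
  have ha : eps f i h a (-(a * b)) = eps f i h a b := by
    rw [show -(a * b) = (-a) * b from (neg_mul a b).symm, eps_mul_right, eps_neg_self, zero_add]
  have hb : eps f i h b (-(a * b)) = eps f i h b a := by
    rw [show -(a * b) = a * (-b) from (mul_neg a b).symm, eps_mul_right, eps_neg_self, add_zero]
  rw [ha, hb] at h0
  exact h0

lemma alt_two_zero (heq : f i = f ⟨(i : ℕ) + 1, h⟩) :
    MilnorK.mk k n f + MilnorK.mk k n f = 0 := by
  have key := eps_anticomm f i h (f i) (f i)
  have he : eps f i h (f i) (f i) = MilnorK.mk k n f := by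
    unfold eps
    rw [Function.update_eq_self i f, heq, Function.update_eq_self]
  rwa [he] at key

section Eta

/-- `ιMulti` landing in the `n`-th exterior power -/
noncomputable def iMultiP (k : Type) [Field k] (n : ℕ) :
    (KaehlerDifferential ℤ k) [⋀^Fin n]→ₗ[k] (⋀[k]^n (KaehlerDifferential ℤ k)) :=
  (ExteriorAlgebra.ιMulti k n).codRestrict _
    (fun v => ExteriorAlgebra.ιMulti_range k n ⟨v, rfl⟩)

lemma iMultiP_coe (v : Fin n → KaehlerDifferential ℤ k) :
    (iMultiP k n v : ExteriorAlgebra k (KaehlerDifferential ℤ k)) =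
      ExteriorAlgebra.ιMulti k n v := rfl

lemma dlog_mul (u v : kˣ) : dlog k (u * v) = dlog k u + dlog k v := by
  have hu : (u : k) ≠ 0 := Units.ne_zero u
  have hv : (v : k) ≠ 0 := Units.ne_zero v
  simp only [dlog, mul_inv, Units.val_mul, Units.val_inv_eq_inv_val, Derivation.leibniz,
    smul_add, smul_smul]
  rw [add_comm]
  congr 2
  · field_simp
  · field_simp

/-- the basic dlog map on the free abelian group -/
noncomputable def etaF (k : Type) [Field k] (n : ℕ) :
    FreeAbelianGroup (Fin n → kˣ) →+ (⋀[k]^n (KaehlerDifferential ℤ k)) :=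
  FreeAbelianGroup.lift (fun f => iMultiP k n (fun i => dlog k (f i)))

lemma etaF_of (f : Fin n → kˣ) :
    etaF k n (FreeAbelianGroup.of f) = iMultiP k n (fun i => dlog k (f i)) :=
  FreeAbelianGroup.lift_apply_of _ _

lemma dlog_comp_update (f : Fin n → kˣ) (i : Fin n) (b : kˣ) :
    (fun j => dlog k (Function.update f i b j)) =
      Function.update (fun j => dlog k (f j)) i (dlog k b) := by
  funext j
  rcases eq_or_ne j i with rfl | hji
  · simp
  · simp [Function.update_of_ne hji]

lemma etaF_ml {z : FreeAbelianGroup (Fin n → kˣ)} (hz : z ∈ mlRel k n) : etaF k n z = 0 := by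
  obtain ⟨f, i, b, c, rfl⟩ := hz
  rw [map_sub, map_sub, etaF_of, etaF_of, etaF_of, dlog_comp_update, dlog_comp_update,
    dlog_comp_update, dlog_mul, AlternatingMap.map_update_add]
  abel

lemma etaF_st {z : FreeAbelianGroup (Fin n → kˣ)} (hz : z ∈ stRel k n) : etaF k n z = 0 := by
  obtain ⟨f, i, h, hsum, rfl⟩ := hz
  rw [etaF_of]
  set j : Fin n := ⟨(i : ℕ) + 1, h⟩ with hj
  set g : Fin n → KaehlerDifferential ℤ k := fun m => dlog k (f m) with hg
  have hb0 : ((f i : k)) ≠ 0 := Units.ne_zero _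
  have hc0 : ((f j : k)) ≠ 0 := Units.ne_zero _
  set s : k := -((f j : k))⁻¹ * (f i : k) with hs
  have hdc : dlog k (f j) = s • dlog k (f i) := by
    have hcb : ((f j : k)) = 1 - (f i : k) := by linear_combination hsum
    simp only [dlog, Units.val_inv_eq_inv_val, smul_smul]
    rw [hcb]
    rw [show KaehlerDifferential.D ℤ k (1 - (f i : k)) = - KaehlerDifferential.D ℤ k (f i : k) by
      rw [map_sub, Derivation.map_one_eq_zero, zero_sub]]
    rw [smul_neg, ← neg_smul]
    congr 1
    have h1 : (1 : k) - (f i : k) ≠ 0 := by rw [← hcb]; exact hc0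
    rw [hs, hcb]
    field_simp
  have hgu : g = Function.update g j (s • g i) := by
    funext m
    rcases eq_or_ne m j with rfl | hm
    · rw [Function.update_self, hg]; exact hdc
    · rw [Function.update_of_ne hm]
  rw [hgu, AlternatingMap.map_update_smul]
  have : (iMultiP k n) (Function.update g j (g i)) = 0 := by
    apply AlternatingMap.map_eq_zero_of_eq _ _ (i := i) (j := j)
    · rw [Function.update_of_ne (hij i h), Function.update_self]
    · exact hij i h
  rw [this, smul_zero]

end Eta

section Maps
variable (k : Type) [Field k] (n : ℕ)

/-- η on `K^M` -/
noncomputable def etaQ : MilnorK k n →+ (⋀[k]^n (KaehlerDifferential ℤ k)) :=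
  QuotientAddGroup.lift _ (etaF k n) (by
    refine (AddSubgroup.closure_le _).2 ?_
    rintro z (hz | hz)
    · exact AddMonoidHom.mem_ker.2 (etaF_ml hz)
    · exact AddMonoidHom.mem_ker.2 (etaF_st hz))

lemma etaQ_mk (f : Fin n → kˣ) :
    etaQ k n (MilnorK.mk k n f) = iMultiP k n (fun i => dlog k (f i)) := by
  have h0 : etaQ k n (MilnorK.mk k n f) = etaF k n (FreeAbelianGroup.of f) := rfl
  rw [h0, etaF_of]

noncomputable def etabar : k ⊗[ℤ] MilnorK k n →ₗ[k] (⋀[k]^n (KaehlerDifferential ℤ k)) :=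
  LinearMap.liftBaseChange k (etaQ k n).toIntLinearMap

lemma etabar_tmul (a : k) (f : Fin n → kˣ) :
    etabar k n (a ⊗ₜ[ℤ] MilnorK.mk k n f) = a • iMultiP k n (fun i => dlog k (f i)) := by
  rw [etabar, LinearMap.liftBaseChange_tmul]
  rw [AddMonoidHom.coe_toIntLinearMap, etaQ_mk]

/-- `z ↦ 1 ⊗ [z]` on the free group, into `k ⊗ ExtPow` -/
noncomputable def preQ1 : FreeAbelianGroup (Fin n → kˣ) →+ k ⊗[ℤ] ExtPow k n :=
  (((TensorProduct.mk ℤ k (ExtPow k n)) 1).toAddMonoidHom).comp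
    (QuotientAddGroup.mk' (AddSubgroup.closure (mlRel k n ∪ altRel k n)))

lemma preQ1_apply (z : FreeAbelianGroup (Fin n → kˣ)) :
    preQ1 k n z = (1 : k) ⊗ₜ[ℤ] (QuotientAddGroup.mk z : ExtPow k n) := rfl

noncomputable def q1hom : TensPow k n →+ k ⊗[ℤ] ExtPow k n :=
  QuotientAddGroup.lift _ (preQ1 k n) (by
    refine (AddSubgroup.closure_le _).2 ?_
    intro z hz
    apply AddMonoidHom.mem_ker.2
    rw [preQ1_apply]
    rw [(QuotientAddGroup.eq_zero_iff z).2 (AddSubgroup.subset_closure (Or.inl hz))]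
    exact TensorProduct.tmul_zero _ _)

noncomputable def q1 : k ⊗[ℤ] TensPow k n →ₗ[k] k ⊗[ℤ] ExtPow k n :=
  LinearMap.liftBaseChange k (q1hom k n).toIntLinearMap

/-- `z ↦ 1 ⊗ [z]` on the free group, into `k ⊗ MilnorK` -/
noncomputable def preQ2 : FreeAbelianGroup (Fin n → kˣ) →+ k ⊗[ℤ] MilnorK k n :=
  (((TensorProduct.mk ℤ k (MilnorK k n)) 1).toAddMonoidHom).comp
    (QuotientAddGroup.mk' (AddSubgroup.closure (mlRel k n ∪ stRel k n)))

lemma preQ2_apply (z : FreeAbelianGroup (Fin n → kˣ)) :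
    preQ2 k n z = (1 : k) ⊗ₜ[ℤ] (QuotientAddGroup.mk z : MilnorK k n) := rfl

noncomputable def q2hom [CharZero k] : ExtPow k n →+ k ⊗[ℤ] MilnorK k n :=
  QuotientAddGroup.lift _ (preQ2 k n) (by
    refine (AddSubgroup.closure_le _).2 ?_
    rintro z (hz | hz)
    · apply AddMonoidHom.mem_ker.2
      rw [preQ2_apply,
        (QuotientAddGroup.eq_zero_iff z).2 (AddSubgroup.subset_closure (Or.inl hz))]
      exact TensorProduct.tmul_zero _ _
    · apply AddMonoidHom.mem_ker.2
      obtain ⟨f, i, h, heq, rfl⟩ := hz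
      rw [preQ2_apply]
      have h2 : MilnorK.mk k n f + MilnorK.mk k n f = 0 := alt_two_zero f i h heq
      have h1 : (1 : k) = (2 : ℤ) • (2⁻¹ : k) := by norm_num
      show (1 : k) ⊗ₜ[ℤ] (MilnorK.mk k n f) = 0
      rw [h1, TensorProduct.smul_tmul, two_zsmul, h2, TensorProduct.tmul_zero])

noncomputable def q2 [CharZero k] : k ⊗[ℤ] ExtPow k n →ₗ[k] k ⊗[ℤ] MilnorK k n :=
  LinearMap.liftBaseChange k (q2hom k n).toIntLinearMap

end Maps

section Span
variable {k : Type} [Field k] {n : ℕ}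

lemma multilinear_mem_span {M N : Type} [AddCommGroup M] [Module k M]
    [AddCommGroup N] [Module k N]
    (g : MultilinearMap k (fun _ : Fin n => M) N) (s : Set M) (T : Submodule k N)
    (hT : ∀ v : Fin n → M, (∀ i, v i ∈ s) → g v ∈ T) :
    ∀ v : Fin n → M, (∀ i, v i ∈ Submodule.span k s) → g v ∈ T := by
  suffices H : ∀ (A : Finset (Fin n)) (v : Fin n → M),
      (∀ i, v i ∈ Submodule.span k s) → (∀ i, i ∉ A → v i ∈ s) → g v ∈ T by
    intro v hv
    exact H Finset.univ v hv (fun i hi => absurd (Finset.mem_univ i) hi)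
  intro A
  induction A using Finset.induction_on with
  | empty => intro v hv h0; exact hT v fun i => h0 i (Finset.notMem_empty i)
  | @insert a A ha ih =>
    intro v hv h0
    have key : ∀ x ∈ Submodule.span k s, g (Function.update v a x) ∈ T := by
      intro x hx
      induction hx using Submodule.span_induction with
      | mem y hy =>
        apply ih
        · intro i
          rcases eq_or_ne i a with rfl | hia
          · rw [Function.update_self]; exact Submodule.subset_span hy
          · rw [Function.update_of_ne hia]; exact hv i
        · intro i hiA
          rcases eq_or_ne i a with rfl | hia
          · rw [Function.update_self]; exact hy
          · rw [Function.update_of_ne hia]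
            exact h0 i (by simp [Finset.mem_insert, hia, hiA])
      | zero => rw [g.map_update_zero]; exact T.zero_mem
      | add y z hy hz ihy ihz => rw [MultilinearMap.map_update_add]; exact T.add_mem ihy ihz
      | smul c y hy ihy => rw [MultilinearMap.map_update_smul]; exact T.smul_mem c ihy
    have := key (v a) (hv a)
    rwa [Function.update_eq_self] at this

lemma span_dlog : Submodule.span k (Set.range (dlog k)) = ⊤ := by
  rw [eq_top_iff, ← KaehlerDifferential.span_range_derivation ℤ k, Submodule.span_le]
  rintro _ ⟨b, rfl⟩
  rcases eq_or_ne b 0 with rfl | hb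
  · rw [show KaehlerDifferential.D ℤ k 0 = 0 from map_zero _]
    exact Submodule.zero_mem _
  · have hd : KaehlerDifferential.D ℤ k b = b • dlog k (Units.mk0 b hb) := by
      rw [dlog, smul_smul, Units.val_inv_eq_inv_val, Units.val_mk0, mul_inv_cancel₀ hb, one_smul]
    rw [hd]
    exact Submodule.smul_mem _ _ (Submodule.subset_span (Set.mem_range_self _))

end Span

section Surj
variable (k : Type) [Field k] (n : ℕ)

lemma q1_surjective : Function.Surjective (q1 k n) := by
  intro x
  induction x using TensorProduct.induction_on with
  | zero => exact ⟨0, map_zero _⟩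
  | tmul a y =>
    obtain ⟨z, rfl⟩ := QuotientAddGroup.mk'_surjective
      (AddSubgroup.closure (mlRel k n ∪ altRel k n)) y
    refine ⟨a ⊗ₜ[ℤ] (QuotientAddGroup.mk z : TensPow k n), ?_⟩
    erw [q1, LinearMap.liftBaseChange_tmul, AddMonoidHom.coe_toIntLinearMap]
    have h0 : q1hom k n (QuotientAddGroup.mk z : TensPow k n) = preQ1 k n z := rfl
    erw [h0, preQ1_apply, TensorProduct.smul_tmul', smul_eq_mul, mul_one]
    rfl
  | add u v hu hv =>
    obtain ⟨u', hu'⟩ := hu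
    obtain ⟨v', hv'⟩ := hv
    exact ⟨u' + v', by rw [map_add, hu', hv']⟩

lemma q2_surjective [CharZero k] : Function.Surjective (q2 k n) := by
  intro x
  induction x using TensorProduct.induction_on with
  | zero => exact ⟨0, map_zero _⟩
  | tmul a y =>
    obtain ⟨z, rfl⟩ := QuotientAddGroup.mk'_surjective
      (AddSubgroup.closure (mlRel k n ∪ stRel k n)) y
    refine ⟨a ⊗ₜ[ℤ] (QuotientAddGroup.mk z : ExtPow k n), ?_⟩
    erw [q2, LinearMap.liftBaseChange_tmul, AddMonoidHom.coe_toIntLinearMap]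
    have h0 : q2hom k n (QuotientAddGroup.mk z : ExtPow k n) = preQ2 k n z := rfl
    erw [h0, preQ2_apply, TensorProduct.smul_tmul', smul_eq_mul, mul_one]
    rfl
  | add u v hu hv =>
    obtain ⟨u', hu'⟩ := hu
    obtain ⟨v', hv'⟩ := hv
    exact ⟨u' + v', by rw [map_add, hu', hv']⟩

lemma etabar_surjective : Function.Surjective (etabar k n) := by
  set T := LinearMap.range (etabar k n) with hT
  have step1 : ∀ f : Fin n → kˣ, iMultiP k n (fun i => dlog k (f i)) ∈ T := by
    intro f
    exact ⟨(1 : k) ⊗ₜ[ℤ] MilnorK.mk k n f, by rw [etabar_tmul, one_smul]⟩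
  have step2 : ∀ v : Fin n → KaehlerDifferential ℤ k, iMultiP k n v ∈ T := by
    intro v
    refine multilinear_mem_span (iMultiP k n).toMultilinearMap (Set.range (dlog k)) T
      ?_ v (fun i => by rw [span_dlog]; trivial)
    intro w hw
    choose g hg using hw
    have hwg : w = fun i => dlog k (g i) := funext fun i => (hg i).symm
    rw [show (iMultiP k n).toMultilinearMap w = iMultiP k n w from rfl, hwg]
    exact step1 g
  intro u
  have hu : (u : ExteriorAlgebra k (KaehlerDifferential ℤ k)) ∈
      Submodule.span k (Set.range (ExteriorAlgebra.ιMulti k n)) := by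
    rw [ExteriorAlgebra.ιMulti_span_fixedDegree]; exact u.2
  have hle : Submodule.span k (Set.range (ExteriorAlgebra.ιMulti k n)) ≤
      T.map (Submodule.subtype _) := by
    rw [Submodule.span_le]
    rintro _ ⟨v, rfl⟩
    exact ⟨iMultiP k n v, step2 v, rfl⟩
  obtain ⟨w, hwT, hw⟩ := hle hu
  obtain ⟨y, hy⟩ := hwT
  exact ⟨y, by rw [hy]; exact Subtype.ext hw⟩

end Surj

end Stmt12Aux
end Aux

theorem stmt12 [CharZero k] (n : ℕ) :
    ∃ (q₁ : k ⊗[ℤ] TensPow k n →ₗ[k] k ⊗[ℤ] ExtPow k n)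
      (q₂ : k ⊗[ℤ] ExtPow k n →ₗ[k] k ⊗[ℤ] MilnorK k n)
      (ηbar : k ⊗[ℤ] MilnorK k n →ₗ[k] ⋀[k]^n (KaehlerDifferential ℤ k)),
      Function.Surjective q₁ ∧ Function.Surjective q₂ ∧ Function.Surjective ηbar ∧
      (∀ (a : k) (f : Fin n → kˣ),
        q₁ (a ⊗ₜ[ℤ] TensPow.mk k n f) = a ⊗ₜ[ℤ] ExtPow.mk k n f) ∧
      (∀ (a : k) (f : Fin n → kˣ),
        q₂ (a ⊗ₜ[ℤ] ExtPow.mk k n f) = a ⊗ₜ[ℤ] MilnorK.mk k n f) ∧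
      (∀ (a : k) (f : Fin n → kˣ),
        (ηbar (a ⊗ₜ[ℤ] MilnorK.mk k n f) : ExteriorAlgebra k (KaehlerDifferential ℤ k)) =
          a • ExteriorAlgebra.ιMulti k n (fun i => dlog k (f i))) := by
  refine ⟨Stmt12Aux.q1 k n, Stmt12Aux.q2 k n, Stmt12Aux.etabar k n,
    Stmt12Aux.q1_surjective k n, Stmt12Aux.q2_surjective k n,
    Stmt12Aux.etabar_surjective k n, ?_, ?_, ?_⟩
  · intro a f
    have h0 : Stmt12Aux.q1hom k n (TensPow.mk k n f)
        = Stmt12Aux.preQ1 k n (FreeAbelianGroup.of f) := rfl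
    erw [Stmt12Aux.q1, LinearMap.liftBaseChange_tmul, AddMonoidHom.coe_toIntLinearMap, h0,
      Stmt12Aux.preQ1_apply, TensorProduct.smul_tmul', smul_eq_mul, mul_one]
    rfl
  · intro a f
    have h0 : Stmt12Aux.q2hom k n (ExtPow.mk k n f)
        = Stmt12Aux.preQ2 k n (FreeAbelianGroup.of f) := rfl
    erw [Stmt12Aux.q2, LinearMap.liftBaseChange_tmul, AddMonoidHom.coe_toIntLinearMap, h0,
      Stmt12Aux.preQ2_apply, TensorProduct.smul_tmul', smul_eq_mul, mul_one]
    rfl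
  · intro a f
    rw [Stmt12Aux.etabar_tmul]
    rfl
end
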